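/- arXiv:1502.02606 — 2 statements merged into one kernel-verified Lean document; each statement's English description precedes it below -/
import Mathlib

section
/- If Greedy(A ∪ B) ⊆ A for disjoint sets A and B, then Greedy(A ∪ B) = Greedy(A), where Greedy is the standard greedy algorithm with a fixed tie-breaking rule for a hereditary constraint. -/
open MeasureTheory Finset

/-- A set function is submodular. -/
def Submodular {V : Type*} [DecidableEq V] (f : Finset V → ℝ) : Prop :=
  ∀ A B : Finset V, f (A ∪ B) + f (A ∩ B) ≤ f A + f B

/-- The Lovász extension: expectation over a uniform threshold θ ∈ (0,1). -/
noncomputable def lovasz {V : Type*} [Fintype V] [DecidableEq V]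
    (f : Finset V → ℝ) (x : V → ℝ) : ℝ :=
  ∫ θ in Set.Ioo (0:ℝ) 1, f (Finset.univ.filter (fun i => θ ≤ x i))

/-- Characteristic vector of a finite set. -/
def charVec {V : Type*} [DecidableEq V] (S : Finset V) : V → ℝ :=
  fun i => if i ∈ S then 1 else 0
/-- One pass of the standard greedy algorithm with fuel `n`: at each step add the
feasible element of `X` with maximum nonnegative marginal gain, breaking ties by
the fixed linear order on `V` (choosing the least maximizer). -/
noncomputable def greedyAux {V : Type*} [Fintype V] [DecidableEq V] [LinearOrder V]
    (f : Finset V → ℝ) (I : Finset V → Prop) [DecidablePred I]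
    (X : Finset V) : ℕ → Finset V → Finset V
  | 0, S => S
  | (n+1), S =>
    let C := (X \ S).filter (fun e => I (insert e S) ∧ 0 ≤ f (insert e S) - f S)
    let M := C.filter (fun e => ∀ e' ∈ C, f (insert e' S) - f S ≤ f (insert e S) - f S)
    if h : M.Nonempty then greedyAux f I X n (insert (M.min' h) S) else S

/-- The standard greedy algorithm on ground set `X`. -/
noncomputable def greedy {V : Type*} [Fintype V] [DecidableEq V] [LinearOrder V]
    (f : Finset V → ℝ) (I : Finset V → Prop) [DecidablePred I]
    (X : Finset V) : Finset V :=
  greedyAux f I X (Fintype.card V) ∅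


/-!
Each greedy step picks the least maximizer of the marginal gain among the feasible candidates.
Shrinking the ground set from `Y` to `X ⊆ Y` only removes candidates, so if the step on `Y`
picks an element of `X`, that element is still a maximizer on `X`, the maximal gain is unchanged,
and the least maximizer on `X` is the same element. Induction along the run shows that a greedy
run on `Y` which stays inside `X` is the run on `X`.
-/

section GreedyRestriction

variable {V : Type*} [DecidableEq V] (f : Finset V → ℝ) (I : Finset V → Prop) [DecidablePred I]

noncomputable def greedyCandidates (X S : Finset V) : Finset V :=
  (X \ S).filter (fun e => I (insert e S) ∧ 0 ≤ f (insert e S) - f S)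

noncomputable def greedyMaximizers (X S : Finset V) : Finset V :=
  (greedyCandidates f I X S).filter
    (fun e => ∀ e' ∈ greedyCandidates f I X S, f (insert e' S) - f S ≤ f (insert e S) - f S)

variable {f I}

lemma greedyCandidates_mono {X Y : Finset V} (hXY : X ⊆ Y) (S : Finset V) :
    greedyCandidates f I X S ⊆ greedyCandidates f I Y S :=
  filter_subset_filter _ (sdiff_subset_sdiff hXY subset_rfl)

lemma greedyMaximizers_nonempty_iff {X S : Finset V} :
    (greedyMaximizers f I X S).Nonempty ↔ (greedyCandidates f I X S).Nonempty := by
  refine ⟨fun h => h.mono (filter_subset _ _), fun h => ?_⟩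
  obtain ⟨m, hm, hmax⟩ := exists_max_image _ (fun e => f (insert e S) - f S) h
  exact ⟨m, mem_filter.2 ⟨hm, hmax⟩⟩

lemma mem_greedyMaximizers_of_subset {X Y S : Finset V} {m : V} (hXY : X ⊆ Y)
    (hm : m ∈ greedyMaximizers f I Y S) (hmX : m ∈ X) : m ∈ greedyMaximizers f I X S := by
  obtain ⟨hmY, hmax⟩ := mem_filter.1 hm
  have hmC : m ∈ greedyCandidates f I X S := by
    obtain ⟨hm', hfeas⟩ := mem_filter.1 hmY
    exact mem_filter.2 ⟨mem_sdiff.2 ⟨hmX, (mem_sdiff.1 hm').2⟩, hfeas⟩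
  exact mem_filter.2 ⟨hmC, fun e he => hmax e (greedyCandidates_mono hXY S he)⟩

/-- Once a maximizer over `Y` lies in `X`, the maximal gains over `X` and `Y` agree. -/
lemma greedyMaximizers_subset_of_mem {X Y S : Finset V} {m : V} (hXY : X ⊆ Y)
    (hm : m ∈ greedyMaximizers f I Y S) (hmX : m ∈ X) :
    greedyMaximizers f I X S ⊆ greedyMaximizers f I Y S := by
  intro e he
  obtain ⟨heC, hemax⟩ := mem_filter.1 he
  have hmC := (mem_filter.1 (mem_greedyMaximizers_of_subset hXY hm hmX)).1
  exact mem_filter.2 ⟨greedyCandidates_mono hXY S heC,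
    fun e' he' => ((mem_filter.1 hm).2 e' he').trans (hemax m hmC)⟩

variable [LinearOrder V]

lemma greedyMaximizers_min'_eq {X Y S : Finset V} (hXY : X ⊆ Y)
    (hY : (greedyMaximizers f I Y S).Nonempty) (hmX : (greedyMaximizers f I Y S).min' hY ∈ X) :
    ∃ hX : (greedyMaximizers f I X S).Nonempty,
      (greedyMaximizers f I X S).min' hX = (greedyMaximizers f I Y S).min' hY := by
  have hmY := min'_mem _ hY
  have hm := mem_greedyMaximizers_of_subset hXY hmY hmX
  refine ⟨⟨_, hm⟩, le_antisymm (min'_le _ _ hm) ?_⟩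
  exact min'_subset _ (greedyMaximizers_subset_of_mem hXY hmY hmX)

variable (f I) [Fintype V]

lemma greedyAux_succ (X S : Finset V) (n : ℕ) :
    greedyAux f I X (n + 1) S =
      if h : (greedyMaximizers f I X S).Nonempty then
        greedyAux f I X n (insert ((greedyMaximizers f I X S).min' h) S)
      else S := by
  -- not `rfl`: inside `greedyAux` the maximality filter is decided via `Fintype V`
  rw [greedyAux]
  unfold greedyMaximizers greedyCandidates
  congr!

lemma subset_greedyAux (X : Finset V) (n : ℕ) (S : Finset V) : S ⊆ greedyAux f I X n S := by
  induction n generalizing S with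
  | zero => exact subset_rfl
  | succ n ih =>
    rw [greedyAux_succ]
    split
    · exact (subset_insert _ _).trans (ih _)
    · exact subset_rfl

variable {f I}

lemma greedyAux_eq_of_subset {X Y : Finset V} (hXY : X ⊆ Y) (n : ℕ) (S : Finset V)
    (hsub : greedyAux f I Y n S ⊆ X) : greedyAux f I Y n S = greedyAux f I X n S := by
  induction n generalizing S with
  | zero => rfl
  | succ n ih =>
    rw [greedyAux_succ] at hsub
    rw [greedyAux_succ, greedyAux_succ]
    by_cases hY : (greedyMaximizers f I Y S).Nonempty
    · rw [dif_pos hY] at hsub ⊢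
      have hmX := hsub (subset_greedyAux f I Y n _ (mem_insert_self _ S))
      obtain ⟨hX, hmin⟩ := greedyMaximizers_min'_eq hXY hY hmX
      rw [dif_pos hX, hmin]
      exact ih _ hsub
    · have hX : ¬ (greedyMaximizers f I X S).Nonempty := by
        rw [greedyMaximizers_nonempty_iff] at hY ⊢
        exact fun h => hY (h.mono (greedyCandidates_mono hXY S))
      rw [dif_neg hY, dif_neg hX]

end GreedyRestriction

theorem greedy_subset_eq_general {V : Type*} [Fintype V] [DecidableEq V] [LinearOrder V]
    (f : Finset V → ℝ) (I : Finset V → Prop) [DecidablePred I]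
    (A B : Finset V)
    (hsub : greedy f I (A ∪ B) ⊆ A) :
    greedy f I (A ∪ B) = greedy f I A :=
  greedyAux_eq_of_subset subset_union_left _ _ hsub

/-- If the greedy solution on `A ∪ B` only uses elements of `A`, it equals the
greedy solution on `A`. -/
theorem greedy_subset_eq {V : Type*} [Fintype V] [DecidableEq V] [LinearOrder V]
    (f : Finset V → ℝ) (I : Finset V → Prop) [DecidablePred I]
    (hf : Submodular f) (hnn : ∀ A : Finset V, 0 ≤ f A)
    (hher : ∀ A B : Finset V, A ⊆ B → I B → I A) (hempty : I ∅)
    (A B : Finset V) (hdisj : Disjoint A B)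
    (hsub : greedy f I (A ∪ B) ⊆ A) :
    greedy f I (A ∪ B) = greedy f I A :=
  greedy_subset_eq_general f I A B hsub
end

section
/- Suppose a random variable D satisfies E[f(D)] ≥ (α/2)·f⁻(𝟙_OPT − p) and E[f(D)] ≥ β·f⁻(p) for some p ∈ [0,1]^V with p ≤ 𝟙_OPT. Then E[f(D)] ≥ (αβ/(α+2β))·f(OPT). -/
open MeasureTheory Finset

/-! Thresholding `𝟙_OPT − p` at `θ` and `p` at `1 − θ` splits `OPT` exactly: an element of `OPT`
with `p e ≥ 1 − θ` lands in the second set and otherwise in the first, while elements outside `OPT`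
(where `p e = 0`) land in neither. Nonnegativity and submodularity then give
`f OPT ≤ f A_θ + f B_{1−θ}`; integrating over `θ` and substituting `θ ↦ 1 − θ` in the second term
yields `f OPT ≤ f⁻(𝟙_OPT − p) + f⁻(p)`, and the bound is `2β` times the first hypothesis plus `α`
times the second. -/

theorem Submodular.map_union_le {V : Type*} [DecidableEq V] {f : Finset V → ℝ}
    (hsub : Submodular f) (hnn : ∀ A, 0 ≤ f A) (A B : Finset V) :
    f (A ∪ B) ≤ f A + f B :=
  (le_add_of_nonneg_right (hnn _)).trans (hsub A B)

theorem setIntegral_Ioo_zero_one_comp_one_sub {E : Type*} [NormedAddCommGroup E]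
    [NormedSpace ℝ E] (h : ℝ → E) :
    ∫ θ in Set.Ioo (0:ℝ) 1, h (1 - θ) = ∫ θ in Set.Ioo (0:ℝ) 1, h θ := by
  simp only [← integral_Ioc_eq_integral_Ioo, ← intervalIntegral.integral_of_le zero_le_one,
    intervalIntegral.integral_comp_sub_left, sub_self, sub_zero]

section Threshold

variable {V : Type*} [Fintype V]

theorem integrableOn_comp_of_measurable {α : Type*} [MeasurableSpace α] {μ : Measure α}
    {s : Set α} (hs : μ s < ⊤) (g : Finset V → ℝ) {S : α → Finset V} (hS : Measurable S) :
    IntegrableOn (fun a => g (S a)) s μ :=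
  Measure.integrableOn_of_bounded (M := ∑ A, |g A|) hs.ne
    ((measurable_of_countable g).comp hS).aestronglyMeasurable
    (Filter.Eventually.of_forall fun a =>
      single_le_sum (f := fun A => |g A|) (fun _ _ => abs_nonneg _) (mem_univ (S a)))

theorem measurable_filter_le (x : V → ℝ) :
    Measurable fun θ : ℝ => univ.filter fun i => θ ≤ x i := by
  refine measurable_finset_iff.2 fun i => ?_
  simpa using measurableSet_setOfPred.1 (measurableSet_Iic (a := x i))

theorem integrableOn_Ioo_filter_le (g : Finset V → ℝ) (x : V → ℝ) :
    IntegrableOn (fun θ : ℝ => g (univ.filter fun i => θ ≤ x i)) (Set.Ioo 0 1) :=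
  integrableOn_comp_of_measurable measure_Ioo_lt_top g (measurable_filter_le x)

theorem integrableOn_Ioo_filter_one_sub_le (g : Finset V → ℝ) (x : V → ℝ) :
    IntegrableOn (fun θ : ℝ => g (univ.filter fun i => 1 - θ ≤ x i)) (Set.Ioo 0 1) :=
  integrableOn_comp_of_measurable measure_Ioo_lt_top g
    ((measurable_filter_le x).comp (measurable_const.sub measurable_id))

variable [DecidableEq V]

theorem filter_le_charVec_sub_union_filter_one_sub_le {S : Finset V} {p : V → ℝ}
    (hp0 : ∀ e, 0 ≤ p e) (hp1 : ∀ e, p e ≤ charVec S e) {θ : ℝ} (hθ : θ ∈ Set.Ioo 0 1) :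
    (univ.filter fun i => θ ≤ charVec S i - p i) ∪ (univ.filter fun i => 1 - θ ≤ p i) = S := by
  obtain ⟨hθ0, hθ1⟩ := hθ
  ext i
  simp only [mem_union, mem_filter, mem_univ, true_and]
  have hpi := hp1 i
  by_cases hi : i ∈ S
  · simp only [charVec, hi, if_true, iff_true] at hpi ⊢
    by_contra! h
    linarith
  · simp only [charVec, hi, if_false, iff_false, not_or, not_le] at hpi ⊢
    constructor <;> linarith [hp0 i]

theorem Submodular.apply_le_lovasz_add_lovasz {f : Finset V → ℝ} (hsub : Submodular f)
    (hnn : ∀ A, 0 ≤ f A) {S : Finset V} {p : V → ℝ}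
    (hp0 : ∀ e, 0 ≤ p e) (hp1 : ∀ e, p e ≤ charVec S e) :
    f S ≤ lovasz f (fun e => charVec S e - p e) + lovasz f p := by
  have hA := integrableOn_Ioo_filter_le f fun e => charVec S e - p e
  have hB := integrableOn_Ioo_filter_one_sub_le f p
  calc f S = ∫ _ in Set.Ioo (0:ℝ) 1, f S := by simp
    _ ≤ ∫ θ in Set.Ioo (0:ℝ) 1, (f (univ.filter fun i => θ ≤ charVec S i - p i)
          + f (univ.filter fun i => 1 - θ ≤ p i)) :=
        setIntegral_mono_on (integrableOn_const measure_Ioo_lt_top.ne) (hA.add hB)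
          measurableSet_Ioo fun θ hθ =>
            (congrArg f (filter_le_charVec_sub_union_filter_one_sub_le hp0 hp1 hθ)).symm.trans_le
              (hsub.map_union_le hnn _ _)
    _ = lovasz f (fun e => charVec S e - p e) + lovasz f p := by
        rw [integral_add hA hB, setIntegral_Ioo_zero_one_comp_one_sub
          fun θ => f (univ.filter fun i => θ ≤ p i)]
        rfl

end Threshold

/-- Combining the non-monotone bounds yields an `αβ/(α+2β)` fraction of the optimum. -/
theorem combine_bounds_nonmonotone {V : Type*} [Fintype V] [DecidableEq V]
    (f : Finset V → ℝ) (hsub : Submodular f) (hnn : ∀ A : Finset V, 0 ≤ f A)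
    (OPT : Finset V) (α β : ℝ) (hα : 0 < α) (hβ : 0 < β)
    (p : V → ℝ) (hp0 : ∀ e, 0 ≤ p e) (hp1 : ∀ e, p e ≤ charVec OPT e)
    (ED : ℝ)
    (h1 : α / 2 * lovasz f (fun e => charVec OPT e - p e) ≤ ED)
    (h2 : β * lovasz f p ≤ ED) :
    α * β / (α + 2 * β) * f OPT ≤ ED := by
  have hsplit := hsub.apply_le_lovasz_add_lovasz hnn hp0 hp1
  rw [div_mul_eq_mul_div, div_le_iff₀ (by positivity)]
  calc α * β * f OPT
      ≤ α * β * (lovasz f (fun e => charVec OPT e - p e) + lovasz f p) := by gcongr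
    _ = 2 * β * (α / 2 * lovasz f (fun e => charVec OPT e - p e)) + α * (β * lovasz f p) := by
        ring
    _ ≤ 2 * β * ED + α * ED := by gcongr
    _ = ED * (α + 2 * β) := by ring
end
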